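/- arXiv:1309.1354 — 2 statements merged into one kernel-verified Lean document; each statement's English description precedes it below -/
import Mathlib

section
/- The diagonal lift ^D I of the identity tensor field I ∈ ℑ¹₁(M) to T*M, defined by ^D I(^H X) = ^H X and ^D I(^V ω) = −^V ω, satisfies (^D I)² = id and is an almost paracomplex structure on T*M, and the rescaled Cheeger–Gromoll metric CG g_f is pure with respect to ^D I, so (T*M, ^D I, CG g_f) is an almost paracomplex Norden manifold. -/
open scoped BigOperators

namespace CGCot

noncomputable section

/-- A point of the cotangent bundle `T*ℝⁿ ≃ ℝⁿ × ℝⁿ` (single-chart model):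
base coordinates `x = q.1` and fibre coordinates `p = q.2`. -/
abbrev Pt (n : ℕ) : Type := (Fin n → ℝ) × (Fin n → ℝ)

/-- A tangent vector to the cotangent bundle, split into its components along
`∂/∂xⁱ` (first factor) and `∂/∂pᵢ` (second factor). -/
abbrev Vec (n : ℕ) : Type := (Fin n → ℝ) × (Fin n → ℝ)

/-- Vector fields on the cotangent bundle. -/
abbrev VectorField (n : ℕ) : Type := Pt n → Vec n

/-- A (0,2)-tensor field (e.g. a pseudo-Riemannian metric) on the cotangent bundle,
given pointwise on tangent vectors. -/
abbrev Met (n : ℕ) : Type := Pt n → Vec n → Vec n → ℝ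

/-- Partial derivative `∂ᵢF` of a function on the base. -/
def pd (n : ℕ) (F : (Fin n → ℝ) → ℝ) (i : Fin n) (x : Fin n → ℝ) : ℝ :=
  fderiv ℝ F x (Pi.single i 1)

/-- Components `g^{ij}` of the inverse metric. -/
def ginv (n : ℕ) (g : (Fin n → ℝ) → Fin n → Fin n → ℝ) (x : Fin n → ℝ) (i j : Fin n) : ℝ :=
  (Matrix.of (g x))⁻¹ i j

/-- Christoffel symbols `Γ^h_{ij}` of the Levi-Civita connection of `g`. -/
def Chr (n : ℕ) (g : (Fin n → ℝ) → Fin n → Fin n → ℝ) (x : Fin n → ℝ) (h i j : Fin n) : ℝ :=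
  (1 / 2) * ∑ k, ginv n g x h k *
    (pd n (fun y => g y k j) i x + pd n (fun y => g y k i) j x - pd n (fun y => g y i j) k x)

/-- Curvature components `R_{ijl}{}^s` of `g`, i.e. `R(∂ᵢ,∂ⱼ)∂ₗ = R_{ijl}{}^s ∂ₛ`
for `R(X,Y) = [∇_X,∇_Y] - ∇_{[X,Y]}`. -/
def Riem (n : ℕ) (g : (Fin n → ℝ) → Fin n → Fin n → ℝ) (x : Fin n → ℝ) (i j l s : Fin n) : ℝ :=
  pd n (fun y => Chr n g y s j l) i x - pd n (fun y => Chr n g y s i l) j x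
    + ∑ k, (Chr n g x s i k * Chr n g x k j l - Chr n g x s j k * Chr n g x k i l)

/-- The base manifold `(M,g)` is flat: its curvature tensor vanishes identically. -/
def IsFlatBase (n : ℕ) (g : (Fin n → ℝ) → Fin n → Fin n → ℝ) : Prop :=
  ∀ (x : Fin n → ℝ) (i j l s : Fin n), Riem n g x i j l s = 0

/-- `R_.{}^{k}{}_{j}{}_.{}^{is} = g^{kt} g^{im} R_{tjm}{}^{s}`. -/
def Rup (n : ℕ) (g : (Fin n → ℝ) → Fin n → Fin n → ℝ) (x : Fin n → ℝ) (k j i s : Fin n) : ℝ :=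
  ∑ t, ∑ m, ginv n g x k t * ginv n g x i m * Riem n g x t j m s

/-- The horizontal vectors `E_j = ∂/∂xʲ + p_a Γ^a_{hj} ∂/∂p_h` of the adapted frame. -/
def E (n : ℕ) (g : (Fin n → ℝ) → Fin n → Fin n → ℝ) (j : Fin n) : VectorField n := fun q =>
  (Pi.single j 1, fun h => ∑ a, q.2 a * Chr n g q.1 a h j)

/-- The vertical vectors `E_j̄ = ∂/∂p_j` of the adapted frame. -/
def Ebar (n : ℕ) (j : Fin n) : VectorField n := fun _ => (0, Pi.single j 1)

/-- The Lie bracket of vector fields on the cotangent bundle. -/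
def bracket (n : ℕ) (X Y : VectorField n) : VectorField n := fun q =>
  fderiv ℝ Y q (X q) - fderiv ℝ X q (Y q)

/-- Horizontal lift of a (possibly fibre-dependent) vector field `Z`. -/
def HLiftP (n : ℕ) (g : (Fin n → ℝ) → Fin n → Fin n → ℝ) (Z : Pt n → Fin n → ℝ) :
    VectorField n := fun q =>
  (Z q, fun h => ∑ a, ∑ j, q.2 a * Chr n g q.1 a h j * Z q j)

/-- Horizontal lift `^H X` of a vector field `X` on the base. -/
def HLift (n : ℕ) (g : (Fin n → ℝ) → Fin n → Fin n → ℝ) (X : (Fin n → ℝ) → Fin n → ℝ) :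
    VectorField n :=
  HLiftP n g fun q => X q.1

/-- Vertical lift of a (possibly fibre-dependent) 1-form. -/
def VLiftP (n : ℕ) (ω : Pt n → Fin n → ℝ) : VectorField n := fun q => (0, ω q)

/-- Vertical lift `^V ω` of a 1-form `ω` on the base. -/
def VLift (n : ℕ) (ω : (Fin n → ℝ) → Fin n → ℝ) : VectorField n := fun q => (0, ω q.1)

/-- `α = 1 + r²` where `r² = g^{ij} pᵢ pⱼ`. -/
def alpha (n : ℕ) (g : (Fin n → ℝ) → Fin n → Fin n → ℝ) (q : Pt n) : ℝ :=
  1 + ∑ i, ∑ j, ginv n g q.1 i j * q.2 i * q.2 j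

/-- `p^i = g^{it} p_t`. -/
def pup (n : ℕ) (g : (Fin n → ℝ) → Fin n → Fin n → ℝ) (q : Pt n) (i : Fin n) : ℝ :=
  ∑ t, ginv n g q.1 i t * q.2 t

/-- The vertical part of a tangent vector `u` at `q` (the components of the unique 1-form
`ω` such that `u = ^H X + ^V ω` with `X = u.1`). -/
def vert (n : ℕ) (g : (Fin n → ℝ) → Fin n → Fin n → ℝ) (q : Pt n) (u : Vec n) (h : Fin n) : ℝ :=
  u.2 h - ∑ a, ∑ j, q.2 a * Chr n g q.1 a h j * u.1 j

/-- The rescaled Cheeger-Gromoll type metric `^{CG}g_f` on the cotangent bundle: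
`^{CG}g_f(^Vω,^Vθ) = (1/α)(g⁻¹(ω,θ) + g⁻¹(ω,p) g⁻¹(θ,p))`, `^{CG}g_f(^Vω,^HY) = 0`,
`^{CG}g_f(^HX,^HY) = f g(X,Y)`. -/
def CGmetric (n : ℕ) (g : (Fin n → ℝ) → Fin n → Fin n → ℝ) (f : (Fin n → ℝ) → ℝ) :
    Met n := fun q u v =>
  f q.1 * (∑ i, ∑ j, g q.1 i j * u.1 i * v.1 j)
    + (1 / alpha n g q) *
      ((∑ i, ∑ j, ginv n g q.1 i j * vert n g q u i * vert n g q v j)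
        + (∑ i, ∑ j, ginv n g q.1 i j * vert n g q u i * q.2 j)
          * (∑ i, ∑ j, ginv n g q.1 i j * vert n g q v i * q.2 j))

/-- The tensor `{}^f A^h_{ij} = (1/f)(f_i δ^h_j + f_j δ^h_i - f^m g_{ij})`. -/
def Af (n : ℕ) (g : (Fin n → ℝ) → Fin n → Fin n → ℝ) (f : (Fin n → ℝ) → ℝ)
    (x : Fin n → ℝ) (h i j : Fin n) : ℝ :=
  (1 / f x) * (pd n f i x * (if h = j then (1:ℝ) else 0)
    + pd n f j x * (if h = i then (1:ℝ) else 0)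
    - (∑ k, ginv n g x h k * pd n f k x) * g x i j)

/-- `A(X,Y)` as a vector field on the base. -/
def ATens (n : ℕ) (g : (Fin n → ℝ) → Fin n → Fin n → ℝ) (f : (Fin n → ℝ) → ℝ)
    (X Y : (Fin n → ℝ) → Fin n → ℝ) (x : Fin n → ℝ) : Fin n → ℝ := fun h =>
  ∑ i, ∑ j, Af n g f x h i j * X x i * Y x j

/-- Covariant derivative `∇_X Y` of vector fields on the base. -/
def covDerV (n : ℕ) (g : (Fin n → ℝ) → Fin n → Fin n → ℝ)
    (X Y : (Fin n → ℝ) → Fin n → ℝ) (x : Fin n → ℝ) : Fin n → ℝ := fun h =>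
  (∑ i, X x i * pd n (fun y => Y y h) i x) + ∑ i, ∑ j, Chr n g x h i j * X x i * Y x j

/-- Covariant derivative `∇_X θ` of a 1-form on the base. -/
def covDer1 (n : ℕ) (g : (Fin n → ℝ) → Fin n → Fin n → ℝ)
    (X θ : (Fin n → ℝ) → Fin n → ℝ) (x : Fin n → ℝ) : Fin n → ℝ := fun l =>
  (∑ i, X x i * pd n (fun y => θ y l) i x) - ∑ i, ∑ h, Chr n g x h i l * X x i * θ x h

/-- The 1-form `p ∘ R(X,Y)` with components `(p∘R(X,Y))_l = p_s R_{ijl}{}^s Xⁱ Yʲ`. -/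
def pR (n : ℕ) (g : (Fin n → ℝ) → Fin n → Fin n → ℝ) (X Y : (Fin n → ℝ) → Fin n → ℝ)
    (q : Pt n) : Fin n → ℝ := fun l =>
  ∑ i, ∑ j, ∑ s, q.2 s * Riem n g q.1 i j l s * X q.1 i * Y q.1 j

/-- The (fibre-dependent) vector field `p(g⁻¹ ∘ R( · ,X) θ̃)` with components
`p_s R_.{}^l{}_i{}_.{}^{js} Xⁱ θⱼ`. -/
def PRX (n : ℕ) (g : (Fin n → ℝ) → Fin n → Fin n → ℝ) (X θ : (Fin n → ℝ) → Fin n → ℝ)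
    (q : Pt n) : Fin n → ℝ := fun l =>
  ∑ i, ∑ j, ∑ s, q.2 s * Rup n g q.1 l i j s * X q.1 i * θ q.1 j

/-- The Liouville (canonical) vector field `γδ = p_i E_ī`. -/
def Liou (n : ℕ) : VectorField n := fun q => (0, q.2)

/-- The almost paracomplex structure `J` with `J(^HX) = -^HX`, `J(^Vω) = ^Vω`,
as a pointwise endomorphism of tangent vectors. -/
def Jmap (n : ℕ) (g : (Fin n → ℝ) → Fin n → Fin n → ℝ) (q : Pt n) (u : Vec n) : Vec n :=
  (-u.1, fun h => u.2 h - 2 * ∑ a, ∑ j, q.2 a * Chr n g q.1 a h j * u.1 j)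

/-- The diagonal lift `^D I` of the identity tensor field: `^D I(^HX) = ^HX`,
`^D I(^Vω) = -^Vω`, as a pointwise endomorphism of tangent vectors. -/
def DImap (n : ℕ) (g : (Fin n → ℝ) → Fin n → Fin n → ℝ) (q : Pt n) (u : Vec n) : Vec n :=
  (u.1, fun h => (2 * ∑ a, ∑ j, q.2 a * Chr n g q.1 a h j * u.1 j) - u.2 h)

/-- `D` is the Levi-Civita connection of the metric `G` on the cotangent bundle:
it is tensorial in the lower argument, additive and Leibniz in the upper argument,
torsion-free and metric. -/
structure IsLeviCivita (n : ℕ) (G : Met n)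
    (D : VectorField n → VectorField n → VectorField n) : Prop where
  add_left : ∀ X Y Z : VectorField n, D (X + Y) Z = D X Z + D Y Z
  smul_left : ∀ (h : Pt n → ℝ) (X Y : VectorField n),
    D (fun q => h q • X q) Y = fun q => h q • D X Y q
  add_right : ∀ X Y Z : VectorField n, ContDiff ℝ (⊤ : ℕ∞) Y → ContDiff ℝ (⊤ : ℕ∞) Z →
    D X (Y + Z) = D X Y + D X Z
  leibniz : ∀ (h : Pt n → ℝ) (X Y : VectorField n),
    ContDiff ℝ (⊤ : ℕ∞) h → ContDiff ℝ (⊤ : ℕ∞) Y →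
    D X (fun q => h q • Y q) = fun q => (fderiv ℝ h q (X q)) • Y q + h q • D X Y q
  torsion_free : ∀ X Y : VectorField n, (fun q => D X Y q - D Y X q) = bracket n X Y
  compat : ∀ X Y Z : VectorField n, ContDiff ℝ (⊤ : ℕ∞) Y → ContDiff ℝ (⊤ : ℕ∞) Z →
    ∀ q : Pt n, fderiv ℝ (fun q' => G q' (Y q') (Z q')) q (X q)
      = G q (D X Y q) (Z q) + G q (Y q) (D X Z q)

/-- Curvature tensor `R̃(X,Y)Z = ∇̃_X ∇̃_Y Z - ∇̃_Y ∇̃_X Z - ∇̃_{[X,Y]} Z` of a connection. -/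
def RT (n : ℕ) (D : VectorField n → VectorField n → VectorField n)
    (X Y Z : VectorField n) : VectorField n := fun q =>
  D X (D Y Z) q - D Y (D X Z) q - D (bracket n X Y) Z q

/-- The Lie derivative `(L_Y φ)X = [Y, φX] - φ[Y,X]` of a (1,1)-tensor field `φ`. -/
def LieT (n : ℕ) (T : Pt n → Vec n → Vec n) (Y X : VectorField n) : VectorField n := fun q =>
  bracket n Y (fun q' => T q' (X q')) q - T q (bracket n Y X q)

/-- The Tachibana operator
`(Φ_φ ω)(X,Y,Z) = (φX)(ω(Y,Z)) - X(ω(φY,Z)) + ω((L_Y φ)X, Z) + ω(Y, (L_Z φ)X)`. -/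
def Tach (n : ℕ) (G : Met n) (T : Pt n → Vec n → Vec n) (X Y Z : VectorField n) :
    Pt n → ℝ := fun q =>
  fderiv ℝ (fun q' => G q' (Y q') (Z q')) q (T q (X q))
    - fderiv ℝ (fun q' => G q' (T q' (Y q')) (Z q')) q (X q)
    + G q (LieT n T Y X q) (Z q) + G q (Y q) (LieT n T Z X q)

/-- `(∇̃_X J)Y` for the paracomplex structure `J`. -/
def covJ (n : ℕ) (g : (Fin n → ℝ) → Fin n → Fin n → ℝ)
    (D : VectorField n → VectorField n → VectorField n) (X Y : VectorField n) :
    VectorField n := fun q =>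
  D X (fun q' => Jmap n g q' (Y q')) q - Jmap n g q (D X Y q)

/-- `S̃(X,Y) = (1/2){(∇̃_{JY} J)X + J((∇̃_Y J)X) - J((∇̃_X J)Y)}`. -/
def Stilde (n : ℕ) (g : (Fin n → ℝ) → Fin n → Fin n → ℝ)
    (D : VectorField n → VectorField n → VectorField n) (X Y : VectorField n) :
    VectorField n := fun q =>
  (1 / 2 : ℝ) • (covJ n g D (fun q' => Jmap n g q' (Y q')) X q
    + Jmap n g q (covJ n g D Y X q) - Jmap n g q (covJ n g D X Y q))

/-- The almost product connection `∇̄_X Y = ∇̃_X Y - S̃(X,Y)`. -/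
def nablaBar (n : ℕ) (g : (Fin n → ℝ) → Fin n → Fin n → ℝ)
    (D : VectorField n → VectorField n → VectorField n) (X Y : VectorField n) :
    VectorField n := fun q =>
  D X Y q - Stilde n g D X Y q

/-- The torsion tensor `T̄(X,Y) = ∇̄_X Y - ∇̄_Y X - [X,Y]` of `∇̄`. -/
def Tbar (n : ℕ) (g : (Fin n → ℝ) → Fin n → Fin n → ℝ)
    (D : VectorField n → VectorField n → VectorField n) (X Y : VectorField n) :
    VectorField n := fun q =>
  nablaBar n g D X Y q - nablaBar n g D Y X q - bracket n X Y q

/-- The Nijenhuis tensor of `J`: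
`N(X,Y) = [JX,JY] - J[JX,Y] - J[X,JY] + J²[X,Y]` (here `J² = id`). -/
def Nij (n : ℕ) (g : (Fin n → ℝ) → Fin n → Fin n → ℝ) (X Y : VectorField n) :
    VectorField n := fun q =>
  bracket n (fun q' => Jmap n g q' (X q')) (fun q' => Jmap n g q' (Y q')) q
    - Jmap n g q (bracket n (fun q' => Jmap n g q' (X q')) Y q)
    - Jmap n g q (bracket n X (fun q' => Jmap n g q' (Y q')) q)
    + bracket n X Y q

/-- The product conjugate connection `∇̃^{(J)}_X Y = J(∇̃_X (JY))`. -/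
def Dconj (n : ℕ) (g : (Fin n → ℝ) → Fin n → Fin n → ℝ)
    (D : VectorField n → VectorField n → VectorField n) (X Y : VectorField n) :
    VectorField n := fun q =>
  Jmap n g q (D X (fun q' => Jmap n g q' (Y q')) q)


/-- The diagonal lift `^D I` of the identity tensor field (`^D I(^HX) = ^HX`,
`^D I(^Vω) = −^Vω`) is an almost paracomplex structure (`(^D I)² = id`, `^D I ≠ ±id`)
and `^{CG}g_f` is pure with respect to it, so `(T*M, ^D I, ^{CG}g_f)` is an almost
paracomplex Norden manifold. -/
theorem CGmetric_pure_DI {n : ℕ} (g : (Fin n → ℝ) → Fin n → Fin n → ℝ)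
    (hg : ContDiff ℝ (⊤ : ℕ∞) g)
    (hgsymm : ∀ x i j, g x i j = g x j i)
    (hgpos : ∀ x, (Matrix.of (g x)).PosDef)
    (f : (Fin n → ℝ) → ℝ) (hf : ContDiff ℝ (⊤ : ℕ∞) f) (hfpos : ∀ x, 0 < f x) :
    (∀ (q : Pt n) (u : Vec n), DImap n g q (DImap n g q u) = u)
    ∧ (0 < n → ∀ q : Pt n,
        (∃ u : Vec n, DImap n g q u ≠ u) ∧ (∃ u : Vec n, DImap n g q u ≠ -u))
    ∧ (∀ (q : Pt n) (u v : Vec n),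
        CGmetric n g f q (DImap n g q u) v = CGmetric n g f q u (DImap n g q v)) := by

  refine ⟨?_, ?_, ?_⟩
  · intro q u
    ext h <;> simp [DImap] <;> ring
  · intro hn q
    have i0 : Fin n := ⟨0, hn⟩
    constructor
    · refine ⟨(0, Pi.single i0 1), ?_⟩
      intro hEq
      have h2 := congrArg (fun w : Vec n => w.2 i0) hEq
      simp [DImap, Pi.single_apply] at h2
      linarith
    · refine ⟨(Pi.single i0 1, 0), ?_⟩
      intro hEq
      have h1 := congrArg (fun w : Vec n => w.1 i0) hEq
      simp [DImap, Pi.single_apply] at h1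
      linarith
  · intro q u v
    have hvert : ∀ (w : Vec n) (h : Fin n),
        vert n g q (DImap n g q w) h = -(vert n g q w h) := by
      intro w h
      simp [vert, DImap]
      ring
    have hfst : ∀ w : Vec n, (DImap n g q w).1 = w.1 := fun _ => rfl
    simp only [CGmetric, hvert, hfst]
    simp only [neg_mul, mul_neg, Finset.sum_neg_distrib, neg_neg]

end

end CGCot
end

section
/- The triple (T*M, J, CG g_f), with J the almost product structure J(^H X) = −^H X, J(^V ω) = ^V ω, is a locally product Riemannian manifold (i.e. J is integrable) if and only if the base manifold (M,g) is flat. -/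
open scoped BigOperators

namespace CGCot

noncomputable section

section SumAlgebra

variable {n : ℕ}

lemma swapo (f : Fin n → Fin n → ℝ) :
    ∑ a, ∑ b, f a b = ∑ b, ∑ a, f a b := Finset.sum_comm

lemma swapi (f : Fin n → Fin n → Fin n → ℝ) :
    ∑ a, ∑ b, ∑ c, f a b c = ∑ a, ∑ c, ∑ b, f a b c :=
  Finset.sum_congr rfl fun _ _ => Finset.sum_comm

lemma swapi4 (f : Fin n → Fin n → Fin n → Fin n → ℝ) :
    ∑ a, ∑ b, ∑ c, ∑ d, f a b c d = ∑ a, ∑ b, ∑ d, ∑ c, f a b c d :=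
  Finset.sum_congr rfl fun _ _ => Finset.sum_congr rfl fun _ _ => Finset.sum_comm

lemma sum3_13 (f : Fin n → Fin n → Fin n → ℝ) :
    ∑ a, ∑ b, ∑ c, f a b c = ∑ c, ∑ b, ∑ a, f a b c := by
  rw [swapo (fun a b => ∑ c, f a b c)]
  rw [swapi (fun b a c => f a b c)]
  rw [swapo (fun b c => ∑ a, f a b c)]

lemma sum3_231 (f : Fin n → Fin n → Fin n → ℝ) :
    ∑ a, ∑ b, ∑ c, f a b c = ∑ b, ∑ c, ∑ a, f a b c := by
  rw [swapo (fun a b => ∑ c, f a b c)]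
  rw [swapi (fun b a c => f a b c)]

lemma sum4_14 (f : Fin n → Fin n → Fin n → Fin n → ℝ) :
    ∑ a, ∑ b, ∑ c, ∑ d, f a b c d = ∑ d, ∑ b, ∑ c, ∑ a, f a b c d := by
  rw [swapi4 (fun a b c d => f a b c d)]
  rw [swapi (fun a b d => ∑ c, f a b c d)]
  rw [swapo (fun a d => ∑ b, ∑ c, f a b c d)]
  rw [swapi (fun d a b => ∑ c, f a b c d)]
  rw [swapi4 (fun d b a c => f a b c d)]

lemma sum4_2431 (f : Fin n → Fin n → Fin n → Fin n → ℝ) :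
    ∑ a, ∑ b, ∑ c, ∑ d, f a b c d = ∑ b, ∑ d, ∑ c, ∑ a, f a b c d := by
  rw [swapo (fun a b => ∑ c, ∑ d, f a b c d)]
  rw [swapi (fun b a c => ∑ d, f a b c d)]
  rw [swapi4 (fun b c a d => f a b c d)]
  rw [swapi (fun b c d => ∑ a, f a b c d)]

lemma flat2 (c : ℝ) (f : Fin n → Fin n → ℝ) :
    c * (∑ b, ∑ i, f b i) = ∑ b, ∑ i, c * f b i := by
  rw [Finset.mul_sum]
  exact Finset.sum_congr rfl fun b _ => Finset.mul_sum _ _ _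

lemma algebra_core (n : ℕ) (P x1 x2 y1 y2 aYu aXv aXy aYx : Fin n → ℝ)
    (bYu bXv bXy bYx : ℝ)
    (G : Fin n → Fin n → Fin n → ℝ) (dG : Fin n → Fin n → Fin n → Fin n → ℝ)
    (hG : ∀ a b c, G a b c = G a c b) (hdG : ∀ a b c i, dG a b c i = dG a c b i)
    (h : Fin n) :
    bYu - 2 * ∑ a, ∑ j, (P a * G a h j * aYu j
        + y1 j * (P a * (-∑ i, x1 i * dG a h j i)
          + G a h j * (x2 a - 2 * ∑ b, ∑ i, P b * G b a i * x1 i)))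
    - (bXv - 2 * ∑ a, ∑ j, (P a * G a h j * aXv j
        + x1 j * (P a * (-∑ i, y1 i * dG a h j i)
          + G a h j * (y2 a - 2 * ∑ b, ∑ i, P b * G b a i * y1 i))))
    - (bYu - (bXy - 2 * ∑ a, ∑ j, (P a * G a h j * aXy j
          + x1 j * (P a * (∑ i, y1 i * dG a h j i) + G a h j * y2 a)))
        - 2 * ∑ a, ∑ j, P a * G a h j * (aYu j - -aXy j))
    - (bYx - 2 * ∑ a, ∑ j, (P a * G a h j * aYx j
          + y1 j * (P a * (∑ i, x1 i * dG a h j i) + G a h j * x2 a))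
        - bXv - 2 * ∑ a, ∑ j, P a * G a h j * (-aYx j - aXv j))
    + (bYx - bXy)
    = 4 * ∑ i, ∑ j, ∑ s, P s * (dG s j h i - dG s i h j
        + ∑ k, (G s i k * G k j h - G s j k * G k i h)) * x1 i * y1 j := by
  -- normalise the RHS integrand using the symmetries of `G` and `dG`
  have hR : ∀ s j i : Fin n, P s * (dG s j h i - dG s i h j
        + ∑ k, (G s i k * G k j h - G s j k * G k i h)) * x1 i * y1 j
      = P s * dG s h j i * x1 i * y1 j - P s * dG s h i j * x1 i * y1 j
        + ((∑ k, P s * G s k i * G k h j * x1 i * y1 j)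
            - ∑ k, P s * G s k j * G k h i * x1 i * y1 j) := by
    intro s j i
    rw [hdG s j h i, hdG s i h j]
    rw [show (∑ k, (G s i k * G k j h - G s j k * G k i h))
        = ∑ k, (G s k i * G k h j - G s k j * G k h i) from
      Finset.sum_congr rfl fun k _ => by rw [hG s i k, hG k j h, hG s j k, hG k i h]]
    rw [Finset.sum_sub_distrib]
    rw [show (∑ k, P s * G s k i * G k h j * x1 i * y1 j)
        = (∑ k, G s k i * G k h j) * (P s * x1 i * y1 j) from by
      rw [Finset.sum_mul]; exact Finset.sum_congr rfl fun k _ => by ring]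
    rw [show (∑ k, P s * G s k j * G k h i * x1 i * y1 j)
        = (∑ k, G s k j * G k h i) * (P s * x1 i * y1 j) from by
      rw [Finset.sum_mul]; exact Finset.sum_congr rfl fun k _ => by ring]
    ring
  -- the six structured double sums on the left
  have e1 : (∑ a, ∑ j, (P a * G a h j * aYu j
        + y1 j * (P a * (-∑ i, x1 i * dG a h j i)
          + G a h j * (x2 a - 2 * ∑ b, ∑ i, P b * G b a i * x1 i))))
      = (∑ a, ∑ j, P a * G a h j * aYu j)
        - (∑ a, ∑ j, y1 j * P a * ∑ i, x1 i * dG a h j i)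
        + (∑ a, ∑ j, y1 j * G a h j * x2 a)
        - 2 * ∑ a, ∑ j, y1 j * G a h j * ∑ b, ∑ i, P b * G b a i * x1 i := by
    calc (∑ a, ∑ j, (P a * G a h j * aYu j
        + y1 j * (P a * (-∑ i, x1 i * dG a h j i)
          + G a h j * (x2 a - 2 * ∑ b, ∑ i, P b * G b a i * x1 i))))
        = ∑ a, ∑ j, (P a * G a h j * aYu j
            - y1 j * P a * (∑ i, x1 i * dG a h j i)
            + y1 j * G a h j * x2 a
            - 2 * (y1 j * G a h j * ∑ b, ∑ i, P b * G b a i * x1 i)) :=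
          Finset.sum_congr rfl fun a _ => Finset.sum_congr rfl fun j _ => by ring
      _ = _ := by
          simp only [Finset.sum_add_distrib, Finset.sum_sub_distrib, ← Finset.mul_sum]
  have e2 : (∑ a, ∑ j, (P a * G a h j * aXv j
        + x1 j * (P a * (-∑ i, y1 i * dG a h j i)
          + G a h j * (y2 a - 2 * ∑ b, ∑ i, P b * G b a i * y1 i))))
      = (∑ a, ∑ j, P a * G a h j * aXv j)
        - (∑ a, ∑ j, x1 j * P a * ∑ i, y1 i * dG a h j i)
        + (∑ a, ∑ j, x1 j * G a h j * y2 a)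
        - 2 * ∑ a, ∑ j, x1 j * G a h j * ∑ b, ∑ i, P b * G b a i * y1 i := by
    calc (∑ a, ∑ j, (P a * G a h j * aXv j
        + x1 j * (P a * (-∑ i, y1 i * dG a h j i)
          + G a h j * (y2 a - 2 * ∑ b, ∑ i, P b * G b a i * y1 i))))
        = ∑ a, ∑ j, (P a * G a h j * aXv j
            - x1 j * P a * (∑ i, y1 i * dG a h j i)
            + x1 j * G a h j * y2 a
            - 2 * (x1 j * G a h j * ∑ b, ∑ i, P b * G b a i * y1 i)) :=
          Finset.sum_congr rfl fun a _ => Finset.sum_congr rfl fun j _ => by ring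
      _ = _ := by
          simp only [Finset.sum_add_distrib, Finset.sum_sub_distrib, ← Finset.mul_sum]
  have e3 : (∑ a, ∑ j, (P a * G a h j * aXy j
          + x1 j * (P a * (∑ i, y1 i * dG a h j i) + G a h j * y2 a)))
      = (∑ a, ∑ j, P a * G a h j * aXy j)
        + (∑ a, ∑ j, x1 j * P a * ∑ i, y1 i * dG a h j i)
        + (∑ a, ∑ j, x1 j * G a h j * y2 a) := by
    calc (∑ a, ∑ j, (P a * G a h j * aXy j
          + x1 j * (P a * (∑ i, y1 i * dG a h j i) + G a h j * y2 a)))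
        = ∑ a, ∑ j, (P a * G a h j * aXy j
            + x1 j * P a * (∑ i, y1 i * dG a h j i)
            + x1 j * G a h j * y2 a) :=
          Finset.sum_congr rfl fun a _ => Finset.sum_congr rfl fun j _ => by ring
      _ = _ := by simp only [Finset.sum_add_distrib]
  have e4 : (∑ a, ∑ j, P a * G a h j * (aYu j - -aXy j))
      = (∑ a, ∑ j, P a * G a h j * aYu j) + (∑ a, ∑ j, P a * G a h j * aXy j) := by
    calc (∑ a, ∑ j, P a * G a h j * (aYu j - -aXy j))
        = ∑ a, ∑ j, (P a * G a h j * aYu j + P a * G a h j * aXy j) :=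
          Finset.sum_congr rfl fun a _ => Finset.sum_congr rfl fun j _ => by ring
      _ = _ := by simp only [Finset.sum_add_distrib]
  have e5 : (∑ a, ∑ j, (P a * G a h j * aYx j
          + y1 j * (P a * (∑ i, x1 i * dG a h j i) + G a h j * x2 a)))
      = (∑ a, ∑ j, P a * G a h j * aYx j)
        + (∑ a, ∑ j, y1 j * P a * ∑ i, x1 i * dG a h j i)
        + (∑ a, ∑ j, y1 j * G a h j * x2 a) := by
    calc (∑ a, ∑ j, (P a * G a h j * aYx j
          + y1 j * (P a * (∑ i, x1 i * dG a h j i) + G a h j * x2 a)))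
        = ∑ a, ∑ j, (P a * G a h j * aYx j
            + y1 j * P a * (∑ i, x1 i * dG a h j i)
            + y1 j * G a h j * x2 a) :=
          Finset.sum_congr rfl fun a _ => Finset.sum_congr rfl fun j _ => by ring
      _ = _ := by simp only [Finset.sum_add_distrib]
  have e6 : (∑ a, ∑ j, P a * G a h j * (-aYx j - aXv j))
      = -(∑ a, ∑ j, P a * G a h j * aYx j) - (∑ a, ∑ j, P a * G a h j * aXv j) := by
    calc (∑ a, ∑ j, P a * G a h j * (-aYx j - aXv j))
        = ∑ a, ∑ j, (-(P a * G a h j * aYx j) - P a * G a h j * aXv j) :=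
          Finset.sum_congr rfl fun a _ => Finset.sum_congr rfl fun j _ => by ring
      _ = _ := by simp only [Finset.sum_sub_distrib, Finset.sum_neg_distrib]
  -- the four right-hand atoms, reordered to the left-hand conventions
  have r1 : (∑ i, ∑ j, ∑ s, P s * dG s h j i * x1 i * y1 j)
      = ∑ a, ∑ j, y1 j * P a * ∑ i, x1 i * dG a h j i := by
    calc (∑ i, ∑ j, ∑ s, P s * dG s h j i * x1 i * y1 j)
        = ∑ i, ∑ j, ∑ s, y1 j * P s * (x1 i * dG s h j i) :=
          Finset.sum_congr rfl fun i _ => Finset.sum_congr rfl fun j _ =>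
            Finset.sum_congr rfl fun s _ => by ring
      _ = ∑ s, ∑ j, ∑ i, y1 j * P s * (x1 i * dG s h j i) :=
          sum3_13 (fun i j s => y1 j * P s * (x1 i * dG s h j i))
      _ = _ := Finset.sum_congr rfl fun a _ => Finset.sum_congr rfl fun j _ =>
          (Finset.mul_sum _ _ _).symm
  have r2 : (∑ i, ∑ j, ∑ s, P s * dG s h i j * x1 i * y1 j)
      = ∑ a, ∑ j, x1 j * P a * ∑ i, y1 i * dG a h j i := by
    calc (∑ i, ∑ j, ∑ s, P s * dG s h i j * x1 i * y1 j)
        = ∑ i, ∑ j, ∑ s, (fun a j' i' => x1 j' * P a * (y1 i' * dG a h j' i')) s i j :=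
          Finset.sum_congr rfl fun i _ => Finset.sum_congr rfl fun j _ =>
            Finset.sum_congr rfl fun s _ => by ring
      _ = ∑ a, ∑ j, ∑ i, (fun a j' i' => x1 j' * P a * (y1 i' * dG a h j' i')) a j i :=
          (sum3_231 (fun a j' i' => x1 j' * P a * (y1 i' * dG a h j' i'))).symm
      _ = _ := Finset.sum_congr rfl fun a _ => Finset.sum_congr rfl fun j _ =>
          (Finset.mul_sum _ _ _).symm
  have r3 : (∑ i, ∑ j, ∑ s, ∑ k, P s * G s k i * G k h j * x1 i * y1 j)
      = ∑ a, ∑ j, y1 j * G a h j * ∑ b, ∑ i, P b * G b a i * x1 i := by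
    calc (∑ i, ∑ j, ∑ s, ∑ k, P s * G s k i * G k h j * x1 i * y1 j)
        = ∑ i, ∑ j, ∑ s, ∑ k,
            (fun a j' b i' => y1 j' * G a h j' * (P b * G b a i' * x1 i')) k j s i :=
          Finset.sum_congr rfl fun i _ => Finset.sum_congr rfl fun j _ =>
            Finset.sum_congr rfl fun s _ => Finset.sum_congr rfl fun k _ => by ring
      _ = ∑ a, ∑ j, ∑ b, ∑ i,
            (fun a j' b i' => y1 j' * G a h j' * (P b * G b a i' * x1 i')) a j b i :=
          (sum4_14 (fun a j' b i' => y1 j' * G a h j' * (P b * G b a i' * x1 i'))).symm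
      _ = _ := Finset.sum_congr rfl fun a _ => Finset.sum_congr rfl fun j _ =>
          (flat2 _ _).symm
  have r4 : (∑ i, ∑ j, ∑ s, ∑ k, P s * G s k j * G k h i * x1 i * y1 j)
      = ∑ a, ∑ j, x1 j * G a h j * ∑ b, ∑ i, P b * G b a i * y1 i := by
    calc (∑ i, ∑ j, ∑ s, ∑ k, P s * G s k j * G k h i * x1 i * y1 j)
        = ∑ i, ∑ j, ∑ s, ∑ k,
            (fun a j' b i' => x1 j' * G a h j' * (P b * G b a i' * y1 i')) k i s j :=
          Finset.sum_congr rfl fun i _ => Finset.sum_congr rfl fun j _ =>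
            Finset.sum_congr rfl fun s _ => Finset.sum_congr rfl fun k _ => by ring
      _ = ∑ a, ∑ j, ∑ b, ∑ i,
            (fun a j' b i' => x1 j' * G a h j' * (P b * G b a i' * y1 i')) a j b i :=
          (sum4_2431 (fun a j' b i' => x1 j' * G a h j' * (P b * G b a i' * y1 i'))).symm
      _ = _ := Finset.sum_congr rfl fun a _ => Finset.sum_congr rfl fun j _ =>
          (flat2 _ _).symm
  rw [e1, e2, e3, e4, e5, e6]
  simp only [hR]
  simp only [Finset.sum_add_distrib, Finset.sum_sub_distrib]
  rw [r1, r2, r3, r4]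
  ring


end SumAlgebra

/-! ### Auxiliary lemmas -/

section AuxLemmas

variable {n : ℕ}

lemma contDiff_det' {E : Type*} [NormedAddCommGroup E] [NormedSpace ℝ E]
    (A : E → Matrix (Fin n) (Fin n) ℝ) (hA : ∀ i j, ContDiff ℝ (⊤ : ℕ∞) fun x => A x i j) :
    ContDiff ℝ (⊤ : ℕ∞) fun x => (A x).det := by
  simp only [Matrix.det_apply]
  apply ContDiff.sum
  intro σ _
  have : ContDiff ℝ (⊤ : ℕ∞) fun x => ∏ i, A x (σ i) i := contDiff_prod fun i _ => hA (σ i) i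
  simpa [Units.smul_def, zsmul_eq_mul] using
    (contDiff_const (c := ((Equiv.Perm.sign σ : ℤ) : ℝ))).mul this

lemma contDiff_pd {F : (Fin n → ℝ) → ℝ} (hF : ContDiff ℝ (⊤ : ℕ∞) F) (i : Fin n) :
    ContDiff ℝ (⊤ : ℕ∞) (pd n F i) := by
  have h1 : ContDiff ℝ (⊤ : ℕ∞) (fderiv ℝ F) := hF.fderiv_right (le_of_eq (by simp))
  exact h1.clm_apply contDiff_const

variable (g : (Fin n → ℝ) → Fin n → Fin n → ℝ)

lemma contDiff_g_entry (hg : ContDiff ℝ (⊤ : ℕ∞) g) (i j : Fin n) :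
    ContDiff ℝ (⊤ : ℕ∞) fun x => g x i j :=
  contDiff_pi.mp (contDiff_pi.mp hg i) j

lemma contDiff_ginv (hg : ContDiff ℝ (⊤ : ℕ∞) g) (hgpos : ∀ x, (Matrix.of (g x)).PosDef)
    (i j : Fin n) : ContDiff ℝ (⊤ : ℕ∞) fun x => ginv n g x i j := by
  have hdet : ContDiff ℝ (⊤ : ℕ∞) fun x => (Matrix.of (g x)).det :=
    contDiff_det' _ fun i j => contDiff_g_entry g hg i j
  have hdetne : ∀ x, (Matrix.of (g x)).det ≠ 0 := fun x => (hgpos x).det_pos.ne'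
  have hadj : ContDiff ℝ (⊤ : ℕ∞) fun x => (Matrix.of (g x)).adjugate i j := by
    simp only [Matrix.adjugate_apply]
    apply contDiff_det'
    intro k l
    simp only [Matrix.updateRow_apply]
    by_cases hk : k = j <;> simp [hk, contDiff_const, contDiff_g_entry g hg]
  have : (fun x => ginv n g x i j)
      = fun x => ((Matrix.of (g x)).det)⁻¹ * (Matrix.of (g x)).adjugate i j := by
    funext x
    rw [ginv, Matrix.inv_def, Matrix.smul_apply, Ring.inverse_eq_inv', smul_eq_mul]
  rw [this]
  exact (hdet.inv hdetne).mul hadj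

lemma contDiff_chr (hg : ContDiff ℝ (⊤ : ℕ∞) g) (hgpos : ∀ x, (Matrix.of (g x)).PosDef)
    (h i j : Fin n) : ContDiff ℝ (⊤ : ℕ∞) fun x => Chr n g x h i j := by
  unfold Chr
  refine contDiff_const.mul (ContDiff.sum fun k _ => (contDiff_ginv g hg hgpos h k).mul ?_)
  exact ((contDiff_pd (contDiff_g_entry g hg k j) i).add
    (contDiff_pd (contDiff_g_entry g hg k i) j)).sub (contDiff_pd (contDiff_g_entry g hg i j) k)

lemma chr_symm (hgsymm : ∀ x i j, g x i j = g x j i) (x : Fin n → ℝ) (h i j : Fin n) :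
    Chr n g x h i j = Chr n g x h j i := by
  unfold Chr
  congr 1
  refine Finset.sum_congr rfl fun k _ => ?_
  have e1 : (fun y => g y i j) = fun y => g y j i := funext fun y => hgsymm y i j
  rw [e1]
  ring

end AuxLemmas

section FDHelpers

variable {n : ℕ} {E : Type*} [NormedAddCommGroup E] [NormedSpace ℝ E]

lemma fd_add {f g : E → ℝ} {x : E} (hf : DifferentiableAt ℝ f x) (hg : DifferentiableAt ℝ g x)
    (w : E) : fderiv ℝ (fun y => f y + g y) x w = fderiv ℝ f x w + fderiv ℝ g x w := by
  rw [fderiv_fun_add hf hg]; simp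

lemma fd_sub {f g : E → ℝ} {x : E} (hf : DifferentiableAt ℝ f x) (hg : DifferentiableAt ℝ g x)
    (w : E) : fderiv ℝ (fun y => f y - g y) x w = fderiv ℝ f x w - fderiv ℝ g x w := by
  rw [fderiv_fun_sub hf hg]; simp

lemma fd_neg {f : E → ℝ} {x : E} (w : E) :
    fderiv ℝ (fun y => -f y) x w = -fderiv ℝ f x w := by
  rw [fderiv_fun_neg]; simp

lemma fd_mul {f g : E → ℝ} {x : E} (hf : DifferentiableAt ℝ f x) (hg : DifferentiableAt ℝ g x)
    (w : E) : fderiv ℝ (fun y => f y * g y) x w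
      = f x * fderiv ℝ g x w + g x * fderiv ℝ f x w := by
  rw [fderiv_fun_mul hf hg]; simp [smul_eq_mul]

lemma fd_const_mul {f : E → ℝ} {x : E} (hf : DifferentiableAt ℝ f x) (c : ℝ) (w : E) :
    fderiv ℝ (fun y => c * f y) x w = c * fderiv ℝ f x w := by
  rw [fderiv_const_mul hf]; simp [smul_eq_mul]

lemma fd_sum {ι : Type*} {s : Finset ι} {A : ι → E → ℝ} {x : E}
    (h : ∀ i ∈ s, DifferentiableAt ℝ (A i) x) (w : E) :
    fderiv ℝ (fun y => ∑ i ∈ s, A i y) x w = ∑ i ∈ s, fderiv ℝ (A i) x w := by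
  rw [fderiv_fun_sum h]; simp

lemma fderiv_eq_sum_pd {φ : (Fin n → ℝ) → ℝ} {x : Fin n → ℝ} (v : Fin n → ℝ) :
    fderiv ℝ φ x v = ∑ i, v i * pd n φ i x := by
  have hv : v = ∑ i, v i • (Pi.single i (1 : ℝ) : Fin n → ℝ) := by
    funext k
    simp [Finset.sum_apply, Pi.single_apply]
  conv_lhs => rw [hv]
  rw [map_sum]
  exact Finset.sum_congr rfl fun i _ => by rw [map_smul, smul_eq_mul]; rfl

lemma fd_comp1 {B : VectorField n} {q : Pt n} (hB : DifferentiableAt ℝ B q) (i : Fin n)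
    (w : Vec n) : (fderiv ℝ B q w).1 i = fderiv ℝ (fun q' => (B q').1 i) q w := by
  set e : Vec n →L[ℝ] ℝ :=
    (ContinuousLinearMap.proj i).comp (ContinuousLinearMap.fst ℝ (Fin n → ℝ) (Fin n → ℝ)) with he
  have h := ((e.hasFDerivAt (x := B q)).comp q hB.hasFDerivAt).fderiv
  have : fderiv ℝ (fun q' => (B q').1 i) q w = (e.comp (fderiv ℝ B q)) w := by
    rw [← h]; rfl
  rw [this]; rfl

lemma fd_comp2 {B : VectorField n} {q : Pt n} (hB : DifferentiableAt ℝ B q) (h : Fin n)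
    (w : Vec n) : (fderiv ℝ B q w).2 h = fderiv ℝ (fun q' => (B q').2 h) q w := by
  set e : Vec n →L[ℝ] ℝ :=
    (ContinuousLinearMap.proj h).comp (ContinuousLinearMap.snd ℝ (Fin n → ℝ) (Fin n → ℝ)) with he
  have hh := ((e.hasFDerivAt (x := B q)).comp q hB.hasFDerivAt).fderiv
  have : fderiv ℝ (fun q' => (B q').2 h) q w = (e.comp (fderiv ℝ B q)) w := by
    rw [← hh]; rfl
  rw [this]; rfl

lemma fd_fst {φ : (Fin n → ℝ) → ℝ} {q : Pt n} (hφ : DifferentiableAt ℝ φ q.1) (w : Vec n) :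
    fderiv ℝ (fun q' : Pt n => φ q'.1) q w = fderiv ℝ φ q.1 w.1 := by
  have h := (hφ.hasFDerivAt.comp q (hasFDerivAt_fst (p := q))).fderiv
  have : fderiv ℝ (fun q' : Pt n => φ q'.1) q w
      = ((fderiv ℝ φ q.1).comp (ContinuousLinearMap.fst ℝ (Fin n → ℝ) (Fin n → ℝ))) w := by
    rw [← h]; rfl
  rw [this]; rfl

lemma fd_p2 (a : Fin n) (q : Pt n) (w : Vec n) :
    fderiv ℝ (fun q' : Pt n => q'.2 a) q w = w.2 a := by
  have : (fun q' : Pt n => q'.2 a)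
      = ((ContinuousLinearMap.proj a).comp
          (ContinuousLinearMap.snd ℝ (Fin n → ℝ) (Fin n → ℝ)) : Pt n →L[ℝ] ℝ) := rfl
  rw [this, ContinuousLinearMap.fderiv]; rfl

end FDHelpers

section JDeriv

variable {n : ℕ} (g : (Fin n → ℝ) → Fin n → Fin n → ℝ)

lemma contDiff_comp1 {Z : VectorField n} (hZ : ContDiff ℝ (⊤ : ℕ∞) Z) (i : Fin n) :
    ContDiff ℝ (⊤ : ℕ∞) fun q' => (Z q').1 i :=
  (((ContinuousLinearMap.proj i).comp
    (ContinuousLinearMap.fst ℝ (Fin n → ℝ) (Fin n → ℝ))).contDiff).comp hZ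

lemma contDiff_comp2 {Z : VectorField n} (hZ : ContDiff ℝ (⊤ : ℕ∞) Z) (i : Fin n) :
    ContDiff ℝ (⊤ : ℕ∞) fun q' => (Z q').2 i :=
  (((ContinuousLinearMap.proj i).comp
    (ContinuousLinearMap.snd ℝ (Fin n → ℝ) (Fin n → ℝ))).contDiff).comp hZ

lemma contDiff_p2 (a : Fin n) : ContDiff ℝ (⊤ : ℕ∞) (fun q' : Pt n => q'.2 a) :=
  ((ContinuousLinearMap.proj a).comp
    (ContinuousLinearMap.snd ℝ (Fin n → ℝ) (Fin n → ℝ))).contDiff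


lemma contDiff_chrP (hg : ContDiff ℝ (⊤ : ℕ∞) g) (hgpos : ∀ x, (Matrix.of (g x)).PosDef) (a b c : Fin n) :
    ContDiff ℝ (⊤ : ℕ∞) fun q' : Pt n => Chr n g q'.1 a b c :=
  (contDiff_chr g hg hgpos a b c).comp contDiff_fst

lemma contDiff_Jcomp (hg : ContDiff ℝ (⊤ : ℕ∞) g) (hgpos : ∀ x, (Matrix.of (g x)).PosDef) {Z : VectorField n} (hZ : ContDiff ℝ (⊤ : ℕ∞) Z) :
    ContDiff ℝ (⊤ : ℕ∞) fun q' => Jmap n g q' (Z q') := by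
  have h1 : ContDiff ℝ (⊤ : ℕ∞) fun q' : Pt n => -(Z q').1 :=
    (contDiff_fst.comp hZ).neg
  have h2 : ContDiff ℝ (⊤ : ℕ∞) fun q' : Pt n =>
      (fun h => (Z q').2 h - 2 * ∑ a, ∑ j, q'.2 a * Chr n g q'.1 a h j * (Z q').1 j) := by
    refine contDiff_pi.mpr fun h => ?_
    refine (contDiff_comp2 hZ h).sub (contDiff_const.mul ?_)
    exact ContDiff.sum fun a _ => ContDiff.sum fun j _ =>
      (((contDiff_p2 a).mul (contDiff_chrP g hg hgpos a h j)).mul (contDiff_comp1 hZ j))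
  exact h1.prodMk h2

lemma dJ1 {Z : VectorField n} (q : Pt n) (i : Fin n) (w : Vec n) :
    fderiv ℝ (fun q' => (Jmap n g q' (Z q')).1 i) q w
      = -fderiv ℝ (fun q' => (Z q').1 i) q w := by
  have e0 : (fun q' => (Jmap n g q' (Z q')).1 i) = fun q' => -((Z q').1 i) := rfl
  rw [e0, fd_neg]

lemma dJ2 (hg : ContDiff ℝ (⊤ : ℕ∞) g) (hgpos : ∀ x, (Matrix.of (g x)).PosDef) {Z : VectorField n} (hZ : ContDiff ℝ (⊤ : ℕ∞) Z) (q : Pt n) (h : Fin n) (w : Vec n) :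
    fderiv ℝ (fun q' => (Jmap n g q' (Z q')).2 h) q w
      = fderiv ℝ (fun q' => (Z q').2 h) q w
        - 2 * ∑ a, ∑ j,
            ((q.2 a * Chr n g q.1 a h j) * fderiv ℝ (fun q' => (Z q').1 j) q w
              + (Z q).1 j * (q.2 a * fderiv ℝ (fun x => Chr n g x a h j) q.1 w.1
                  + Chr n g q.1 a h j * w.2 a)) := by
  have hchd : ∀ a b c, DifferentiableAt ℝ (fun q' : Pt n => Chr n g q'.1 a b c) q :=
    fun a b c => ((contDiff_chrP g hg hgpos a b c).differentiable (by simp)).differentiableAt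
  have hp2 : ∀ a, DifferentiableAt ℝ (fun q' : Pt n => q'.2 a) q :=
    fun a => ((contDiff_p2 a).differentiable (by simp)).differentiableAt
  have hZ1 : ∀ j, DifferentiableAt ℝ (fun q' => (Z q').1 j) q :=
    fun j => ((contDiff_comp1 hZ j).differentiable (by simp)).differentiableAt
  have hZ2 : DifferentiableAt ℝ (fun q' => (Z q').2 h) q :=
    ((contDiff_comp2 hZ h).differentiable (by simp)).differentiableAt
  have htrip : ∀ a j, DifferentiableAt ℝ
      (fun q' : Pt n => q'.2 a * Chr n g q'.1 a h j * (Z q').1 j) q :=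
    fun a j => ((hp2 a).mul (hchd a h j)).mul (hZ1 j)
  have hinner : ∀ a, DifferentiableAt ℝ
      (fun q' : Pt n => ∑ j, q'.2 a * Chr n g q'.1 a h j * (Z q').1 j) q :=
    fun a => DifferentiableAt.fun_sum fun j _ => htrip a j
  have hsum : DifferentiableAt ℝ
      (fun q' : Pt n => ∑ a, ∑ j, q'.2 a * Chr n g q'.1 a h j * (Z q').1 j) q :=
    DifferentiableAt.fun_sum fun a _ => hinner a
  have e0 : (fun q' => (Jmap n g q' (Z q')).2 h)
      = fun q' => (Z q').2 h - 2 * ∑ a, ∑ j, q'.2 a * Chr n g q'.1 a h j * (Z q').1 j := rfl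
  rw [e0, fd_sub hZ2 (hsum.const_mul 2), fd_const_mul hsum 2, fd_sum (fun a _ => hinner a)]
  congr 2
  refine Finset.sum_congr rfl fun a _ => ?_
  rw [fd_sum (fun j _ => htrip a j)]
  refine Finset.sum_congr rfl fun j _ => ?_
  rw [fd_mul (f := fun q' => q'.2 a * Chr n g q'.1 a h j) ((hp2 a).mul (hchd a h j)) (hZ1 j), fd_mul (hp2 a) (hchd a h j), fd_p2,
    fd_fst (((contDiff_chr g hg hgpos a h j).differentiable (by simp)).differentiableAt)]

lemma bracket_fst {A B : VectorField n} {q : Pt n}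
    (hA : DifferentiableAt ℝ A q) (hB : DifferentiableAt ℝ B q) (i : Fin n) :
    (bracket n A B q).1 i
      = fderiv ℝ (fun q' => (B q').1 i) q (A q) - fderiv ℝ (fun q' => (A q').1 i) q (B q) := by
  show (fderiv ℝ B q (A q)).1 i - (fderiv ℝ A q (B q)).1 i = _
  rw [fd_comp1 hB, fd_comp1 hA]

lemma bracket_snd {A B : VectorField n} {q : Pt n}
    (hA : DifferentiableAt ℝ A q) (hB : DifferentiableAt ℝ B q) (h : Fin n) :
    (bracket n A B q).2 h
      = fderiv ℝ (fun q' => (B q').2 h) q (A q) - fderiv ℝ (fun q' => (A q').2 h) q (B q) := by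
  show (fderiv ℝ B q (A q)).2 h - (fderiv ℝ A q (B q)).2 h = _
  rw [fd_comp2 hB, fd_comp2 hA]

end JDeriv

section Apply

variable {n : ℕ}

lemma nij_formula_final (g : (Fin n → ℝ) → Fin n → Fin n → ℝ)
    (hg : ContDiff ℝ (⊤ : ℕ∞) g)
    (hgsymm : ∀ x i j, g x i j = g x j i)
    (hgpos : ∀ x, (Matrix.of (g x)).PosDef)
    (X Y : VectorField n) (hX : ContDiff ℝ (⊤ : ℕ∞) X) (hY : ContDiff ℝ (⊤ : ℕ∞) Y)
    (q : Pt n) :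
    Nij n g X Y q = (0, fun h => 4 * ∑ i, ∑ j, ∑ s,
      q.2 s * Riem n g q.1 i j h s * (X q).1 i * (Y q).1 j) := by
  have hXd : DifferentiableAt ℝ X q := (hX.differentiable (by simp)).differentiableAt
  have hYd : DifferentiableAt ℝ Y q := (hY.differentiable (by simp)).differentiableAt
  have hJXd : DifferentiableAt ℝ (fun q' => Jmap n g q' (X q')) q :=
    ((contDiff_Jcomp g hg hgpos hX).differentiable (by simp)).differentiableAt
  have hJYd : DifferentiableAt ℝ (fun q' => Jmap n g q' (Y q')) q :=
    ((contDiff_Jcomp g hg hgpos hY).differentiable (by simp)).differentiableAt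
  refine Prod.ext ?_ ?_
  · show (Nij n g X Y q).1 = 0
    funext i
    have e : (Nij n g X Y q).1 i
        = (bracket n (fun q' => Jmap n g q' (X q')) (fun q' => Jmap n g q' (Y q')) q).1 i
          - (-(bracket n (fun q' => Jmap n g q' (X q')) Y q).1 i)
          - (-(bracket n X (fun q' => Jmap n g q' (Y q')) q).1 i)
          + (bracket n X Y q).1 i := rfl
    rw [e, bracket_fst hJXd hJYd i, bracket_fst hJXd hYd i, bracket_fst hXd hJYd i,
      bracket_fst hXd hYd i]
    simp only [dJ1, Pi.zero_apply]
    ring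
  · show (Nij n g X Y q).2 = _
    funext h
    have e : (Nij n g X Y q).2 h
        = (bracket n (fun q' => Jmap n g q' (X q')) (fun q' => Jmap n g q' (Y q')) q).2 h
          - ((bracket n (fun q' => Jmap n g q' (X q')) Y q).2 h
              - 2 * ∑ a, ∑ j, q.2 a * Chr n g q.1 a h j
                  * (bracket n (fun q' => Jmap n g q' (X q')) Y q).1 j)
          - ((bracket n X (fun q' => Jmap n g q' (Y q')) q).2 h
              - 2 * ∑ a, ∑ j, q.2 a * Chr n g q.1 a h j
                  * (bracket n X (fun q' => Jmap n g q' (Y q')) q).1 j)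
          + (bracket n X Y q).2 h := rfl
    rw [e, bracket_snd hJXd hJYd h, bracket_snd hJXd hYd h, bracket_snd hXd hJYd h,
      bracket_snd hXd hYd h]
    simp only [bracket_fst hJXd hYd, bracket_fst hXd hJYd]
    simp only [dJ1, dJ2 g hg hgpos hX, dJ2 g hg hgpos hY]
    have Jfst : ∀ u : Vec n, (Jmap n g q u).1 = -u.1 := fun u => rfl
    have Jsnd : ∀ (u : Vec n) (a : Fin n), (Jmap n g q u).2 a
        = u.2 a - 2 * ∑ b, ∑ i, q.2 b * Chr n g q.1 b a i * u.1 i := fun u a => rfl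
    simp only [Jfst, Jsnd, map_neg, fderiv_eq_sum_pd]
    exact algebra_core n q.2 ((X q).1) ((X q).2) ((Y q).1) ((Y q).2)
      (fun j => fderiv ℝ (fun q' => (Y q').1 j) q (Jmap n g q (X q)))
      (fun j => fderiv ℝ (fun q' => (X q').1 j) q (Jmap n g q (Y q)))
      (fun j => fderiv ℝ (fun q' => (X q').1 j) q (Y q))
      (fun j => fderiv ℝ (fun q' => (Y q').1 j) q (X q))
      (fderiv ℝ (fun q' => (Y q').2 h) q (Jmap n g q (X q)))
      (fderiv ℝ (fun q' => (X q').2 h) q (Jmap n g q (Y q)))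
      (fderiv ℝ (fun q' => (X q').2 h) q (Y q))
      (fderiv ℝ (fun q' => (Y q').2 h) q (X q))
      (fun a b c => Chr n g q.1 a b c)
      (fun a b c i => pd n (fun x => Chr n g x a b c) i q.1)
      (fun a b c => chr_symm g hgsymm q.1 a b c)
      (fun a b c i =>
        congrArg (fun F => pd n F i q.1)
          (funext fun x => chr_symm g hgsymm x a b c))
      h

end Apply

/-- **Corollary.** `(T*M, J, ^{CG}g_f)` is a locally product Riemannian manifold
(`J` is integrable, i.e. its Nijenhuis tensor vanishes) if and only if `M` is flat. -/
theorem locally_product_iff_flat {n : ℕ} (g : (Fin n → ℝ) → Fin n → Fin n → ℝ)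
    (hg : ContDiff ℝ (⊤ : ℕ∞) g)
    (hgsymm : ∀ x i j, g x i j = g x j i)
    (hgpos : ∀ x, (Matrix.of (g x)).PosDef)
    (f : (Fin n → ℝ) → ℝ) (hf : ContDiff ℝ (⊤ : ℕ∞) f) (hfpos : ∀ x, 0 < f x) :
    (∀ X Y : VectorField n, ContDiff ℝ (⊤ : ℕ∞) X → ContDiff ℝ (⊤ : ℕ∞) Y → Nij n g X Y = fun _ => 0)
      ↔ IsFlatBase n g := by
  constructor
  · intro hN x i j l s
    have hX : ContDiff ℝ (⊤ : ℕ∞) (fun _ : Pt n => ((Pi.single i 1, 0) : Vec n)) :=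
      contDiff_const
    have hY : ContDiff ℝ (⊤ : ℕ∞) (fun _ : Pt n => ((Pi.single j 1, 0) : Vec n)) :=
      contDiff_const
    have h1 := hN _ _ hX hY
    have h2 := congrFun h1 ((x, Pi.single s 1) : Pt n)
    rw [nij_formula_final g hg hgsymm hgpos _ _ hX hY ((x, Pi.single s 1) : Pt n)] at h2
    have h3 := congrFun (congrArg Prod.snd h2) l
    simp only [Pi.single_apply, Prod.snd_zero, Pi.zero_apply] at h3
    have h4 : (4 : ℝ) * Riem n g x i j l s = 0 := by
      simpa [mul_ite, ite_mul, mul_zero, zero_mul, Finset.sum_ite_eq', Finset.sum_ite_eq]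
        using h3
    linarith
  · intro hflat X Y hX hY
    funext q
    rw [nij_formula_final g hg hgsymm hgpos X Y hX hY q]
    have : ∀ h : Fin n, (4 : ℝ) * ∑ i, ∑ j, ∑ s,
        q.2 s * Riem n g q.1 i j h s * (X q).1 i * (Y q).1 j = 0 := by
      intro h
      simp [hflat q.1]
    refine Prod.ext rfl ?_
    funext h
    simpa using this h

end
end CGCot
end
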